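/- Let f(u) = e^u − u − 1 and for y > 2 let ζ(y) > 0 be the unique positive solution of u(e^u − 1)/f(u) = y. Then for all y > 2, f(ζ(y))/ζ(y)^y ≤ 3/4. -/

import Mathlib

/-!
Since `f' = exp - 1`, the defining equation says that `y` is the elasticity `u f'(u) / f(u)`
of `f` at `ζ(y)`. The elasticity of `f` is increasing, because its derivative has the sign of
`(e^u - 1)^2 - u^2 e^u = e^u ((2 sinh (u/2))^2 - u^2) ≥ 0`. Hence `log f(u) - y log u` decreases
on `(0, ζ(y)]` and increases on `[ζ(y), ∞)`, so `u ↦ f(u) / u^y` is minimal at `ζ(y)`. Comparing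
with `u = 1` gives `f(ζ(y)) / ζ(y)^y ≤ f(1) = e - 2 < 3/4`.
-/

open Real Set

theorem div_rpow_le_div_rpow_of_monotoneOn_elasticity {f f' : ℝ → ℝ}
    (hf : ∀ u > 0, HasDerivAt f (f' u) u) (hf_pos : ∀ u > 0, 0 < f u)
    (hmono : MonotoneOn (fun u ↦ u * f' u / f u) (Ioi 0)) {y z u : ℝ} (hz : 0 < z)
    (hzy : z * f' z / f z = y) (hu : 0 < u) : f z / z ^ y ≤ f u / u ^ y := by
  set g : ℝ → ℝ := fun u ↦ log (f u) - y * log u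
  have hg : ∀ x > 0, HasDerivAt g ((x * f' x / f x - y) / x) x := fun x hx ↦ by
    refine (((hf x hx).log (hf_pos x hx).ne').fun_sub
      ((hasDerivAt_log hx.ne').const_mul y)).congr_deriv ?_
    field_simp
  have hg_cont : ∀ a b, 0 < a → ContinuousOn g (Icc a b) := fun a b ha x hx ↦
    (hg x (ha.trans_le hx.1)).continuousAt.continuousWithinAt
  have hg_within : ∀ a b, 0 < a → ∀ x ∈ interior (Icc a b),
      HasDerivWithinAt g ((x * f' x / f x - y) / x) (interior (Icc a b)) x := fun a b ha x hx ↦ by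
    rw [interior_Icc] at hx
    exact (hg x (ha.trans hx.1)).hasDerivWithinAt
  have hgzu : g z ≤ g u := by
    rcases le_total z u with hzu | huz
    · refine monotoneOn_of_hasDerivWithinAt_nonneg (convex_Icc z u) (hg_cont z u hz)
        (hg_within z u hz) (fun x hx ↦ ?_) (left_mem_Icc.2 hzu) (right_mem_Icc.2 hzu) hzu
      rw [interior_Icc] at hx
      have hx0 : 0 < x := hz.trans hx.1
      exact div_nonneg (sub_nonneg.2 (hzy ▸ hmono hz hx0 hx.1.le)) hx0.le
    · refine antitoneOn_of_hasDerivWithinAt_nonpos (convex_Icc u z) (hg_cont u z hu)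
        (hg_within u z hu) (fun x hx ↦ ?_) (left_mem_Icc.2 huz) (right_mem_Icc.2 huz) huz
      rw [interior_Icc] at hx
      have hx0 : 0 < x := hu.trans hx.1
      exact div_nonpos_of_nonpos_of_nonneg (sub_nonpos.2 (hzy ▸ hmono hx0 hz hx.2.le)) hx0.le
  have hg_exp : ∀ x > 0, f x / x ^ y = exp (g x) := fun x hx ↦ by
    rw [exp_sub, exp_log (hf_pos x hx), rpow_def_of_pos hx, mul_comm]
  rw [hg_exp z hz, hg_exp u hu]
  exact exp_le_exp.2 hgzu

theorem mul_exp_half_le_exp_sub_one {u : ℝ} (hu : 0 ≤ u) : u * exp (u / 2) ≤ exp u - 1 := by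
  have hsinh : u / 2 ≤ sinh (u / 2) := self_le_sinh_iff.2 (by linarith)
  have hexp : exp u = exp (u / 2) * exp (u / 2) := by rw [← exp_add, add_halves]
  have hinv : exp (u / 2) * exp (-(u / 2)) = 1 := by rw [← exp_add, add_neg_cancel, exp_zero]
  rw [sinh_eq] at hsinh
  nlinarith [exp_pos (u / 2)]

theorem exp_sub_sub_one_pos {u : ℝ} (hu : u ≠ 0) : 0 < exp u - u - 1 := by
  linarith [add_one_lt_exp hu]

theorem monotoneOn_mul_exp_sub_one_div :
    MonotoneOn (fun u ↦ u * (exp u - 1) / (exp u - u - 1)) (Ioi 0) := by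
  have hderiv : ∀ u : ℝ, 0 < u → HasDerivAt (fun u ↦ u * (exp u - 1) / (exp u - u - 1))
      (((exp u - 1) ^ 2 - u ^ 2 * exp u) / (exp u - u - 1) ^ 2) u := fun u hu ↦ by
    refine (((hasDerivAt_id' u).fun_mul ((hasDerivAt_exp u).sub_const 1)).fun_div
      (((hasDerivAt_exp u).fun_sub (hasDerivAt_id' u)).sub_const 1)
      (exp_sub_sub_one_pos hu.ne').ne').congr_deriv ?_
    ring
  refine monotoneOn_of_hasDerivWithinAt_nonneg (convex_Ioi 0)
    (fun u hu ↦ (hderiv u hu).continuousAt.continuousWithinAt)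
    (fun u hu ↦ (hderiv u (by simpa using hu)).hasDerivWithinAt) fun u hu ↦ ?_
  replace hu : 0 < u := by simpa using hu
  have hsq : u ^ 2 * exp u ≤ (exp u - 1) ^ 2 :=
    calc u ^ 2 * exp u = (u * exp (u / 2)) ^ 2 := by rw [mul_pow, ← exp_nat_mul]; ring_nf
      _ ≤ (exp u - 1) ^ 2 :=
        pow_le_pow_left₀ (by positivity) (mul_exp_half_le_exp_sub_one hu.le) 2
  exact div_nonneg (sub_nonneg.2 hsq) (sq_nonneg _)

/-- With `f(u) = e^u - u - 1` and `ζ(y)` the unique positive root of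
`ζ(e^ζ-1)/f(ζ) = y` for `y > 2`, one has `f(ζ(y))/ζ(y)^y ≤ 3/4` for all `y > 2`. -/
theorem stmt_8 (f ζ : ℝ → ℝ)
    (hf : ∀ u, f u = Real.exp u - u - 1)
    (hζ : ∀ y > 2, 0 < ζ y ∧ ζ y * (Real.exp (ζ y) - 1) / f (ζ y) = y) :
    ∀ y > 2, f (ζ y) / ζ y ^ y ≤ 3 / 4 := by
  intro y hy
  obtain ⟨hz, hzy⟩ := hζ y hy
  have hf_eq : f = fun u ↦ exp u - u - 1 := funext hf
  subst hf_eq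
  have hmin := div_rpow_le_div_rpow_of_monotoneOn_elasticity
    (fun u _ ↦ ((hasDerivAt_exp u).fun_sub (hasDerivAt_id' u)).sub_const 1)
    (fun _ hu ↦ exp_sub_sub_one_pos hu.ne') monotoneOn_mul_exp_sub_one_div hz hzy
    one_pos
  calc _ ≤ exp 1 - 1 - 1 := by simpa using hmin
    _ ≤ 3 / 4 := by linarith [exp_one_lt_d9]
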